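/- arXiv:1211.0925 — 4 statements merged into one kernel-verified Lean document; each statement's English description precedes it below -/
import Mathlib

section
/- For every β > 0, the free energy of the uniform model satisfies f^u(β) ≥ β − log(1+√2). -/
/-!
A single path carries the bound. The zigzag path of `m` columns of height `h`
(`L = m (h + 1)` steps) touches itself at least `(m - 1) h` times, so
`Z^u_{L,β} ≥ e^{β (m - 1) h} / |W_L|`. A self-avoiding path never follows a north step by a
south step or vice versa, and a transfer-matrix count of such non-reversing step sequences
gives `|W_L| ≤ √2 (1 + √2)^L`. Taking `h = m → ∞` yields `f^u(β) ≥ β - log (1 + √2)`.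
-/

open scoped Classical
open Filter

noncomputable section

/-- The three allowed steps: east `(1,0)`, north `(0,1)`, south `(0,-1)`. -/
def stepVec : Fin 3 → ℤ × ℤ := ![(1, 0), (0, 1), (0, -1)]

/-- Position of the partially directed walk after `k` steps,
for a configuration `s` of `L` steps. -/
def pathPos (L : ℕ) (s : Fin L → Fin 3) (k : ℕ) : ℤ × ℤ :=
  ∑ i : Fin L, if (i : ℕ) < k then stepVec (s i) else 0

/-- `s` encodes a path of `W_L` : it is self-avoiding (all visited sites are
distinct) and its last step is horizontal (step index `0`, i.e. `(1,0)`). -/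
def IsPath (L : ℕ) (s : Fin L → Fin 3) : Prop :=
  (∀ j k : ℕ, j ≤ L → k ≤ L → pathPos L s j = pathPos L s k → j = k) ∧
  (∀ hL : 0 < L, s ⟨L - 1, by omega⟩ = 0)

/-- Two lattice sites are adjacent (at euclidean distance 1). -/
def adjacent (p q : ℤ × ℤ) : Prop := |p.1 - q.1| + |p.2 - q.2| = 1

/-- Number of self-touchings: pairs `(i,j)` with `i < j - 1`, `j ≤ L`,
`‖w_i - w_j‖ = 1`. -/
def numTouch (L : ℕ) (s : Fin L → Fin 3) : ℕ :=
  ((Finset.range (L + 1) ×ˢ Finset.range (L + 1)).filter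
    (fun ij => ij.1 + 1 < ij.2 ∧ adjacent (pathPos L s ij.1) (pathPos L s ij.2))).card

/-- The set `W_L` of valid `L`-step configurations. -/
def WL (L : ℕ) : Finset (Fin L → Fin 3) := Finset.univ.filter (IsPath L)

/-- Non-uniform weight of a configuration: each step taken at the origin or
after a horizontal step has weight `1/3`, each step after a vertical step has
weight `1/2`. -/
def nuWeight (L : ℕ) (s : Fin L → Fin 3) : ℝ :=
  ∏ i : Fin L,
    if (i : ℕ) = 0 then (1 / 3 : ℝ)
    else if s ⟨(i : ℕ) - 1, by have := i.isLt; omega⟩ = 0 then 1 / 3 else 1 / 2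

/-- The two models: uniform and non-uniform. -/
inductive Model | u | nu

/-- The law `P^m_L` on `W_L`. -/
def pweight : Model → (L : ℕ) → (Fin L → Fin 3) → ℝ
  | Model.u, L, _ => 1 / ((WL L).card : ℝ)
  | Model.nu, L, s => nuWeight L s

/-- The partition function `Z^m_{L,β} = Σ_{w ∈ W_L} e^{H_{L,β}(w)} P^m_L(w)`,
with Hamiltonian `H_{L,β}(w) = β · (number of self-touchings)`. -/
def Z (m : Model) (L : ℕ) (β : ℝ) : ℝ :=
  ∑ s ∈ WL L, Real.exp (β * (numTouch L s : ℝ)) * pweight m L s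

/-- The normalizing constant `c_β = (1+e^{-β/2})/(1-e^{-β/2})`. -/
def cbeta (β : ℝ) : ℝ := (1 + Real.exp (-β / 2)) / (1 - Real.exp (-β / 2))

/-- The geometric increment law `P_β(v = k) = e^{-(β/2)|k|}/c_β`. -/
def incP (β : ℝ) (k : ℤ) : ℝ := Real.exp (-(β / 2) * |(k : ℝ)|) / cbeta β

/-- Position `V_j` of the random walk built from increments `v`. -/
def Vpos (n : ℕ) (v : Fin n → ℤ) (j : ℕ) : ℤ :=
  ∑ i : Fin n, if (i : ℕ) < j then v i else 0

/-- The area `A_n = Σ_{j=1}^n |V_j|`. -/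
def areaA (n : ℕ) (v : Fin n → ℤ) : ℤ := ∑ j ∈ Finset.Icc 1 n, |Vpos n v j|

/-- Probability under `P_β` of an event `E` depending on the first `n`
increments of the random walk. -/
def wProb (β : ℝ) (n : ℕ) (E : (Fin n → ℤ) → Prop) : ℝ :=
  ∑' v : Fin n → ℤ, if E v then ∏ i : Fin n, incP β (v i) else 0

/-- `P_β(V_{n,k})`: the walk returns to `0` at time `n` with area `A_n = k`. -/
def PV (β : ℝ) (n k : ℕ) : ℝ :=
  wProb β n fun v => Vpos n v n = 0 ∧ areaA n v = (k : ℤ)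

/-- `P_β(V_{n,q})` for rational prescribed area `q`. -/
def PVq (β : ℝ) (n : ℕ) (q : ℚ) : ℝ :=
  wProb β n fun v => Vpos n v n = 0 ∧ (areaA n v : ℚ) = q

/-- `P_β(A_n ≤ α n, V_n = 0)`. -/
def Ple (β : ℝ) (n : ℕ) (α : ℝ) : ℝ :=
  wProb β n fun v => (areaA n v : ℝ) ≤ α * n ∧ Vpos n v n = 0

/-- `P_β(A_n ≤ α n)`. -/
def PleA (β : ℝ) (n : ℕ) (α : ℝ) : ℝ :=
  wProb β n fun v => (areaA n v : ℝ) ≤ α * n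

/-- `P_β(max_{1 ≤ j ≤ n} |V_j| ≤ α)`. -/
def Pmax (β : ℝ) (n : ℕ) (α : ℝ) : ℝ :=
  wProb β n fun v => ∀ j ∈ Finset.Icc 1 n, (|Vpos n v j| : ℝ) ≤ α

/-- `n ∈ N_α`, i.e. `n ≥ 2` and `α n ∈ ℕ`. -/
def Nmem (α : ℚ) (n : ℕ) : Prop := 2 ≤ n ∧ ∃ m : ℕ, α * (n : ℚ) = (m : ℚ)

/-- `g_β(α) = sup_{N ∈ N_α} (1/N) log P_β(V_{N, αN})` for rational `α ≥ 0`. -/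
def gQ (β : ℝ) (α : ℚ) : ℝ :=
  sSup {x : ℝ | ∃ n : ℕ, Nmem α n ∧ x = Real.log (PVq β n (α * n)) / n}

/-- `Γ^u(β) = c_β/e^β`, `Γ^nu(β) = 2c_β/(3e^β)`. -/
def Gam : Model → ℝ → ℝ
  | Model.u, β => cbeta β / Real.exp β
  | Model.nu, β => 2 * cbeta β / (3 * Real.exp β)

/-- `φ^u_β = β - log(1+√2)`, `φ^nu_β = β - log 2`. -/
def phim : Model → ℝ → ℝ
  | Model.u, β => β - Real.log (1 + Real.sqrt 2)
  | Model.nu, β => β - Real.log 2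

end

open Finset Real

noncomputable section

lemma pathPos_zero (L : ℕ) (s : Fin L → Fin 3) : pathPos L s 0 = 0 := by
  simp [pathPos]

lemma pathPos_succ (L : ℕ) (s : Fin L → Fin 3) (i : Fin L) :
    pathPos L s (i + 1) = pathPos L s i + stepVec (s i) := by
  have hsplit : ∀ k : Fin L, (if (k : ℕ) < i + 1 then stepVec (s k) else 0)
      = (if (k : ℕ) < i then stepVec (s k) else 0) + if k = i then stepVec (s k) else 0 := by
    intro k
    split_ifs <;> simp_all [Fin.ext_iff] <;> omega
  simp only [pathPos, hsplit, sum_add_distrib, sum_ite_eq', mem_univ, if_true]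

def IsNonReversing {L : ℕ} (s : Fin (L + 1) → Fin 3) : Prop :=
  ∀ i : Fin L, stepVec (s i.castSucc) + stepVec (s i.succ) ≠ 0

lemma IsPath.isNonReversing {L : ℕ} {s : Fin (L + 1) → Fin 3} (hs : IsPath (L + 1) s) :
    IsNonReversing s := by
  intro i hrev
  have h1 := pathPos_succ (L + 1) s i.castSucc
  have h2 := pathPos_succ (L + 1) s i.succ
  simp only [Fin.val_castSucc, Fin.val_succ] at h1 h2
  have hback : pathPos (L + 1) s (i + 1 + 1) = pathPos (L + 1) s i := by
    rw [h2, h1, add_assoc, hrev, add_zero]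
  have := hs.1 _ _ (by omega) (by omega) hback
  omega

/-- A Perron eigenvector, for the eigenvalue `1 + √2`, of the transfer matrix of
non-reversing step sequences. -/
def nonRevWeight : Fin 3 → ℝ := ![√2, 1, 1]

lemma one_le_nonRevWeight (a : Fin 3) : 1 ≤ nonRevWeight a := by
  fin_cases a <;> simp [nonRevWeight, one_le_sqrt]

lemma sum_nonRevWeight_of_compatible (a : Fin 3) :
    ∑ b, (if stepVec b + stepVec a ≠ 0 then nonRevWeight b else 0)
      = (1 + √2) * nonRevWeight a := by
  have h2 : √2 * √2 = 2 := mul_self_sqrt (by norm_num)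
  fin_cases a <;> simp [Fin.sum_univ_three, stepVec, nonRevWeight] <;> linarith

def nonRevWeightedCount (L : ℕ) : ℝ :=
  ∑ s : Fin (L + 1) → Fin 3, if IsNonReversing s then nonRevWeight (s 0) else 0

lemma isNonReversing_cons {L : ℕ} (b : Fin 3) (t : Fin (L + 1) → Fin 3) :
    IsNonReversing (Fin.cons b t : Fin (L + 2) → Fin 3)
      ↔ stepVec b + stepVec (t 0) ≠ 0 ∧ IsNonReversing t := by
  simp [IsNonReversing, Fin.forall_fin_succ]

lemma nonRevWeightedCount_succ (L : ℕ) :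
    nonRevWeightedCount (L + 1) = (1 + √2) * nonRevWeightedCount L := by
  rw [nonRevWeightedCount, ← (Fin.consEquiv _).sum_comp, Fintype.sum_prod_type, sum_comm,
    nonRevWeightedCount, mul_sum]
  refine sum_congr rfl fun t _ => ?_
  change ∑ b, (if IsNonReversing (Fin.cons b t : Fin (L + 2) → Fin 3) then _ else _) = _
  simp only [isNonReversing_cons, ite_and]
  split_ifs
  · exact sum_nonRevWeight_of_compatible (t 0)
  · simp

lemma nonRevWeightedCount_eq (L : ℕ) : nonRevWeightedCount L = √2 * (1 + √2) ^ (L + 1) := by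
  induction L with
  | zero =>
    have h2 : √2 * √2 = 2 := mul_self_sqrt (by norm_num)
    rw [nonRevWeightedCount, ← (Equiv.funUnique (Fin 1) (Fin 3)).symm.sum_comp]
    simp [IsNonReversing, nonRevWeight, Fin.sum_univ_three]
    linarith
  | succ L ih => rw [nonRevWeightedCount_succ, ih]; ring

lemma card_isNonReversing_le (L : ℕ) :
    (#{s : Fin (L + 1) → Fin 3 | IsNonReversing s} : ℝ) ≤ √2 * (1 + √2) ^ (L + 1) := by
  rw [← nonRevWeightedCount_eq, nonRevWeightedCount, ← sum_filter, card_eq_sum_ones,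
    Nat.cast_sum]
  exact sum_le_sum fun s _ => by exact_mod_cast one_le_nonRevWeight (s 0)

lemma card_WL_le (L : ℕ) : ((WL L).card : ℝ) ≤ √2 * (1 + √2) ^ L := by
  cases L with
  | zero =>
    calc ((WL 0).card : ℝ) ≤ 1 := by exact_mod_cast (card_le_univ _).trans (by simp)
      _ ≤ √2 * (1 + √2) ^ 0 := by simp [one_le_sqrt]
  | succ L =>
    refine le_trans ?_ (card_isNonReversing_le L)
    exact_mod_cast card_le_card fun s hs =>
      mem_filter.2 ⟨mem_univ s, IsPath.isNonReversing (mem_filter.1 hs).2⟩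

/-- Column `q` is `h` steps north (`q` even) or south (`q` odd), followed by one step east. -/
def zigzag (h L : ℕ) (i : Fin L) : Fin 3 :=
  if (i : ℕ) % (h + 1) = h then 0 else if Even ((i : ℕ) / (h + 1)) then 1 else 2

def zigzagHeight (h q r : ℕ) : ℤ := if Even q then r else h - r

lemma div_mod_of_eq_mul_add {n q r b : ℕ} (hr : r < b) (hn : n = q * b + r) :
    n / b = q ∧ n % b = r :=
  (Nat.div_mod_unique (by omega)).2 ⟨by rw [hn]; ring, hr⟩

lemma zigzag_apply {h L : ℕ} (i : Fin L) {q r : ℕ} (hr : r ≤ h)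
    (hi : (i : ℕ) = q * (h + 1) + r) :
    zigzag h L i = if r = h then 0 else if Even q then 1 else 2 := by
  obtain ⟨hdiv, hmod⟩ := div_mod_of_eq_mul_add (by omega) hi
  simp [zigzag, hdiv, hmod]

lemma pathPos_zigzag (h L n : ℕ) :
    ∀ q r, r ≤ h → n = q * (h + 1) + r → n ≤ L →
      pathPos L (zigzag h L) n = ((q : ℤ), zigzagHeight h q r) := by
  induction n with
  | zero =>
    intro q r _ hn _
    obtain ⟨rfl, rfl⟩ : q = 0 ∧ r = 0 := by
      constructor <;> nlinarith
    simp [pathPos_zero, zigzagHeight, Prod.zero_eq_mk]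
  | succ n ih =>
    intro q r hr hn hnL
    have hstep := pathPos_succ L (zigzag h L) ⟨n, by omega⟩
    rcases r with _ | r
    · obtain ⟨q, rfl⟩ : ∃ q', q = q' + 1 := Nat.exists_eq_add_one.2 (by nlinarith)
      have hn' : n = q * (h + 1) + h := by rw [add_one_mul] at hn; omega
      rw [hstep, ih q h le_rfl hn' (by omega), zigzag_apply _ le_rfl hn']
      rcases Nat.even_or_odd q with hq | hq <;>
        simp [zigzagHeight, stepVec, Nat.even_add_one, hq, ← Nat.not_odd_iff_even]
    · have hn' : n = q * (h + 1) + r := by omega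
      rw [hstep, ih q r (by omega) hn' (by omega), zigzag_apply _ (by omega) hn']
      rcases Nat.even_or_odd q with hq | hq
      · simp [zigzagHeight, stepVec, show r ≠ h by omega, hq]
      · simp [zigzagHeight, stepVec, show r ≠ h by omega, hq, ← Nat.not_odd_iff_even]
        ring

lemma pathPos_zigzag_eq {h L j : ℕ} (hj : j ≤ L) :
    pathPos L (zigzag h L) j =
      (((j / (h + 1) : ℕ) : ℤ), zigzagHeight h (j / (h + 1)) (j % (h + 1))) :=
  pathPos_zigzag h L j _ _ (Nat.lt_succ_iff.1 (Nat.mod_lt j h.succ_pos))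
    (Nat.div_add_mod' j (h + 1)).symm hj

lemma zigzagHeight_injective (h q : ℕ) : Function.Injective (zigzagHeight h q) := by
  intro r r' hrr
  unfold zigzagHeight at hrr
  split_ifs at hrr <;> omega

lemma zigzagHeight_succ_sub (h q t : ℕ) (ht : t ≤ h) :
    zigzagHeight h (q + 1) (h - t) = zigzagHeight h q t := by
  rcases Nat.even_or_odd q with hq | hq
  · simp [zigzagHeight, Nat.even_add_one, hq, Nat.cast_sub ht]
  · simp [zigzagHeight, hq, ← Nat.not_odd_iff_even, Nat.cast_sub ht]

lemma zigzag_mem_WL (h m : ℕ) : zigzag h (m * (h + 1)) ∈ WL (m * (h + 1)) := by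
  refine mem_filter.2 ⟨mem_univ _, fun j k hj hk hjk => ?_, fun hL => ?_⟩
  · rw [pathPos_zigzag_eq hj, pathPos_zigzag_eq hk, Prod.mk.injEq, Nat.cast_inj] at hjk
    obtain ⟨hq, hr⟩ := hjk
    rw [hq] at hr
    rw [← Nat.div_add_mod' j (h + 1), ← Nat.div_add_mod' k (h + 1), hq,
      zigzagHeight_injective h _ hr]
  · obtain ⟨m, rfl⟩ : ∃ m', m = m' + 1 :=
      Nat.exists_eq_add_one.2 (Nat.pos_of_mul_pos_right hL)
    rw [zigzag_apply _ le_rfl (q := m) (by simp only [add_one_mul]; omega), if_pos rfl]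

/-- Site `t` of column `q` touches site `h - t` of column `q + 1`. -/
lemma le_numTouch_zigzag (h m : ℕ) :
    (m - 1) * h ≤ numTouch (m * (h + 1)) (zigzag h (m * (h + 1))) := by
  calc (m - 1) * h = #(range (m - 1) ×ˢ range h) := by simp
    _ ≤ _ := card_le_card_of_injOn
      (fun qt => (qt.1 * (h + 1) + qt.2, (qt.1 + 1) * (h + 1) + (h - qt.2))) ?_ ?_
  · rintro ⟨q, t⟩ hqt
    simp only [coe_product, coe_range, Set.mem_prod, Set.mem_Iio] at hqt
    have hm := Nat.mul_le_mul_right (h + 1) (show q + 1 + 1 ≤ m by omega)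
    rw [add_one_mul, add_one_mul] at hm
    have hj₁ : q * (h + 1) + t ≤ m * (h + 1) := by omega
    have hj₂ : (q + 1) * (h + 1) + (h - t) ≤ m * (h + 1) := by rw [add_one_mul]; omega
    simp only [coe_filter, mem_product, mem_range, Set.mem_ofPred_eq]
    refine ⟨⟨by omega, by omega⟩, by rw [add_one_mul]; omega, ?_⟩
    rw [pathPos_zigzag h _ _ q t hqt.2.le rfl hj₁,
      pathPos_zigzag h _ _ (q + 1) (h - t) (by omega) rfl hj₂,
      zigzagHeight_succ_sub h q t hqt.2.le]
    simp [adjacent]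
  · rintro ⟨q, t⟩ hqt ⟨q', t'⟩ hqt' heq
    simp only [coe_product, coe_range, Set.mem_prod, Set.mem_Iio] at hqt hqt'
    have hfst : q * (h + 1) + t = q' * (h + 1) + t' := congrArg Prod.fst heq
    obtain ⟨hq, ht⟩ := div_mod_of_eq_mul_add (n := q * (h + 1) + t) (by omega) rfl
    obtain ⟨hq', ht'⟩ := div_mod_of_eq_mul_add (by omega) hfst
    exact Prod.ext (hq.symm.trans hq') (ht.symm.trans ht')

lemma log_Z_u_ge {L : ℕ} {s : Fin L → Fin 3} (hs : s ∈ WL L) (β : ℝ) :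
    β * numTouch L s - (log √2 + L * log (1 + √2)) ≤ log (Z Model.u L β) := by
  have hcard : (0 : ℝ) < #(WL L) := by exact_mod_cast card_pos.2 ⟨s, hs⟩
  have hterm : exp (β * numTouch L s) / #(WL L) ≤ Z Model.u L β := by
    rw [div_eq_mul_one_div]
    exact single_le_sum (f := fun s => exp (β * numTouch L s) * pweight Model.u L s)
      (fun _ _ => by simp only [pweight]; positivity) hs
  have hlog_card : log #(WL L) ≤ log √2 + L * log (1 + √2) :=
    calc log #(WL L) ≤ log (√2 * (1 + √2) ^ L) := log_le_log hcard (card_WL_le L)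
      _ = _ := by rw [log_mul (by positivity) (by positivity), log_pow]
  calc β * numTouch L s - (log √2 + L * log (1 + √2))
      ≤ log (exp (β * numTouch L s) / #(WL L)) := by
        rw [log_div (exp_pos _).ne' hcard.ne', log_exp]; linarith
    _ ≤ log (Z Model.u L β) := log_le_log (by positivity) hterm

lemma le_log_Z_u_zigzag_div {β : ℝ} (hβ : 0 ≤ β) {m : ℕ} (hm : 1 ≤ m) :
    β - log (1 + √2) - (2 * β + log √2) / m
      ≤ log (Z Model.u (m * (m + 1)) β) / ((m * (m + 1) : ℕ) : ℝ) := by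
  have hZ := log_Z_u_ge (zigzag_mem_WL m m) β
  have htouch : (((m - 1) * m : ℕ) : ℝ) ≤ numTouch _ (zigzag m (m * (m + 1))) := by
    exact_mod_cast le_numTouch_zigzag m m
  have hlog2 : 0 ≤ log √2 := log_nonneg (one_le_sqrt.2 (by norm_num))
  have hmR : (1 : ℝ) ≤ m := by exact_mod_cast hm
  push_cast [Nat.cast_sub hm] at hZ htouch ⊢
  rw [le_div_iff₀ (by positivity)]
  have hexpand : (β - log (1 + √2) - (2 * β + log √2) / m) * (m * (m + 1))
      = (β - log (1 + √2)) * (m * (m + 1)) - (2 * β + log √2) * (m + 1) := by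
    field_simp
  nlinarith [mul_le_mul_of_nonneg_left htouch hβ]

end

/-- For every `β > 0`, the free energy of the uniform model
satisfies `f^u(β) ≥ β - log(1+√2)`. -/
theorem stmt1 (β : ℝ) (hβ : 0 < β) (fu : ℝ)
    (hf : Filter.Tendsto (fun L : ℕ => Real.log (Z Model.u L β) / L)
      Filter.atTop (nhds fu)) :
    fu ≥ β - Real.log (1 + Real.sqrt 2) := by
  have hsub : Tendsto (fun m : ℕ => m * (m + 1)) atTop atTop :=
    tendsto_atTop_mono (fun m => Nat.le_mul_of_pos_right m m.succ_pos) tendsto_id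
  have hbound : Tendsto (fun m : ℕ => β - log (1 + √2) - (2 * β + log √2) / m) atTop
      (nhds (β - log (1 + √2))) := by
    simpa using tendsto_const_nhds.sub (tendsto_const_div_atTop_nhds_zero_nat (2 * β + log √2))
  exact le_of_tendsto_of_tendsto hbound (hf.comp hsub)
    (eventually_atTop.2 ⟨1, fun m hm => le_log_Z_u_zigzag_div hβ.le hm⟩)
end

section
/- For every β > 0 and all N₁, N₂, K₁, K₂ ∈ ℕ, one has P_β(V_{N₁+N₂, K₁+K₂}) ≥ P_β(V_{N₁,K₁}) · P_β(V_{N₂,K₂}). -/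
open scoped Classical
open Filter

section AuxStmt6

lemma cbeta_pos {β : ℝ} (hβ : 0 < β) : 0 < cbeta β := by
  have h1 : Real.exp (-β / 2) < 1 := by
    rw [Real.exp_lt_one_iff]; linarith
  have h0 : 0 < Real.exp (-β / 2) := Real.exp_pos _
  unfold cbeta
  apply div_pos <;> linarith

lemma incP_nonneg {β : ℝ} (hβ : 0 < β) (k : ℤ) : 0 ≤ incP β k :=
  div_nonneg (Real.exp_pos _).le (cbeta_pos hβ).le

lemma summable_incP {β : ℝ} (hβ : 0 < β) : Summable (incP β) := by
  have key : ∀ k : ℤ, incP β k = (Real.exp (-(β/2))) ^ k.natAbs / cbeta β := by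
    intro k
    rw [incP, ← Real.exp_nat_mul]
    congr 1
    have : |(k:ℝ)| = (k.natAbs : ℝ) := by rw [Nat.cast_natAbs, Int.cast_abs]
    rw [this]; ring
  have hr : Real.exp (-(β/2)) < 1 := by rw [Real.exp_lt_one_iff]; linarith
  have hs : Summable (fun n : ℕ => (Real.exp (-(β/2))) ^ n / cbeta β) :=
    (summable_geometric_of_lt_one (Real.exp_pos _).le hr).div_const _
  have h1 : Summable (fun n : ℕ => incP β n) := by
    refine hs.congr fun n => ?_
    rw [key]; simp
  have h2 : Summable (fun n : ℕ => incP β (-n)) := by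
    refine hs.congr fun n => ?_
    rw [key]; simp
  exact Summable.of_nat_of_neg h1 h2

lemma prod_incP_nonneg {β : ℝ} (hβ : 0 < β) {n : ℕ} (v : Fin n → ℤ) :
    0 ≤ ∏ i : Fin n, incP β (v i) :=
  Finset.prod_nonneg fun i _ => incP_nonneg hβ _

set_option maxHeartbeats 800000 in
lemma summable_prod_incP {β : ℝ} (hβ : 0 < β) (n : ℕ) :
    Summable (fun v : Fin n → ℤ => ∏ i : Fin n, incP β (v i)) := by
  induction n with
  | zero => exact .of_finite
  | succ n ih =>
    have h : Summable (fun p : ℤ × (Fin n → ℤ) =>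
        incP β p.1 * ∏ i : Fin n, incP β (p.2 i)) := by
      apply Summable.mul_of_nonneg (summable_incP hβ) ih
      · intro k; exact incP_nonneg hβ k
      · intro v; exact prod_incP_nonneg hβ v
    have h2 : Summable ((fun v : Fin (n+1) → ℤ => ∏ i : Fin (n+1), incP β (v i))
        ∘ (Fin.consEquiv (fun _ => ℤ))) := by
      have heq : ((fun v : Fin (n+1) → ℤ => ∏ i : Fin (n+1), incP β (v i))
          ∘ (Fin.consEquiv (fun _ => ℤ)))
          = fun p : ℤ × (Fin n → ℤ) => incP β p.1 * ∏ i : Fin n, incP β (p.2 i) := by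
        funext p
        simp only [Function.comp_apply, Fin.consEquiv_apply, Fin.prod_univ_succ,
          Fin.cons_zero, Fin.cons_succ]
      rw [heq]
      exact h
    exact (Fin.consEquiv (fun _ => ℤ)).summable_iff.mp h2

lemma Vpos_append_le {N₁ N₂ : ℕ} (v₁ : Fin N₁ → ℤ) (v₂ : Fin N₂ → ℤ) {j : ℕ} (hj : j ≤ N₁) :
    Vpos (N₁ + N₂) (Fin.append v₁ v₂) j = Vpos N₁ v₁ j := by
  unfold Vpos
  rw [Fin.sum_univ_add]
  have h2 : ∀ i : Fin N₂,
      (if ((Fin.natAdd N₁ i : Fin (N₁+N₂)) : ℕ) < j then Fin.append v₁ v₂ (Fin.natAdd N₁ i) else 0) = 0 := by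
    intro i
    rw [if_neg]
    simp only [Fin.coe_natAdd]
    omega
  rw [Finset.sum_congr rfl (fun i _ => h2 i), Finset.sum_const, smul_zero, add_zero]
  refine Finset.sum_congr rfl fun i _ => ?_
  rw [Fin.append_left]
  simp

lemma Vpos_append_ge {N₁ N₂ : ℕ} (v₁ : Fin N₁ → ℤ) (v₂ : Fin N₂ → ℤ) (j : ℕ) :
    Vpos (N₁ + N₂) (Fin.append v₁ v₂) (N₁ + j) = Vpos N₁ v₁ N₁ + Vpos N₂ v₂ j := by
  unfold Vpos
  rw [Fin.sum_univ_add]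
  congr 1
  · refine Finset.sum_congr rfl fun i _ => ?_
    rw [Fin.append_left]
    have hi := i.isLt
    simp only [Fin.coe_castAdd]
    rw [if_pos (by omega), if_pos (by omega)]
  · refine Finset.sum_congr rfl fun i _ => ?_
    rw [Fin.append_right]
    simp only [Fin.coe_natAdd]
    by_cases h : (i : ℕ) < j
    · rw [if_pos (by omega), if_pos h]
    · rw [if_neg (by omega), if_neg h]

lemma area_append {N₁ N₂ : ℕ} (v₁ : Fin N₁ → ℤ) (v₂ : Fin N₂ → ℤ)
    (h1 : Vpos N₁ v₁ N₁ = 0) :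
    areaA (N₁ + N₂) (Fin.append v₁ v₂) = areaA N₁ v₁ + areaA N₂ v₂ := by
  have hIcc : ∀ m : ℕ, Finset.Icc 1 m = Finset.Ioc 0 m := by
    intro m; ext x; simp; omega
  unfold areaA
  rw [hIcc, hIcc, hIcc]
  rw [← Finset.sum_Ioc_consecutive _ (Nat.zero_le N₁) (Nat.le_add_right N₁ N₂)]
  congr 1
  · refine Finset.sum_congr rfl fun j hj => ?_
    rw [Vpos_append_le v₁ v₂ (Finset.mem_Ioc.mp hj).2]
  · rw [show Finset.Ioc N₁ (N₁ + N₂) = (Finset.Ioc 0 N₂).map (addLeftEmbedding N₁) by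
      rw [Finset.map_add_left_Ioc]; simp]
    rw [Finset.sum_map]
    refine Finset.sum_congr rfl fun j _ => ?_
    show |Vpos (N₁ + N₂) (Fin.append v₁ v₂) (N₁ + j)| = _
    rw [Vpos_append_ge, h1, zero_add]

lemma prod_incP_append {β : ℝ} {N₁ N₂ : ℕ} (v₁ : Fin N₁ → ℤ) (v₂ : Fin N₂ → ℤ) :
    ∏ i : Fin (N₁ + N₂), incP β (Fin.append v₁ v₂ i)
      = (∏ i : Fin N₁, incP β (v₁ i)) * ∏ i : Fin N₂, incP β (v₂ i) := by
  rw [Fin.prod_univ_add]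
  congr 1
  · exact Finset.prod_congr rfl fun i _ => by rw [Fin.append_left]
  · exact Finset.prod_congr rfl fun i _ => by rw [Fin.append_right]

lemma append_injective {N₁ N₂ : ℕ} :
    Function.Injective (fun p : (Fin N₁ → ℤ) × (Fin N₂ → ℤ) => Fin.append p.1 p.2) := by
  rintro ⟨a, b⟩ ⟨c, d⟩ h
  simp only at h
  have h1 : a = c := by
    funext i
    have := congrFun h (Fin.castAdd N₂ i)
    rwa [Fin.append_left, Fin.append_left] at this
  have h2 : b = d := by
    funext i
    have := congrFun h (Fin.natAdd N₁ i)
    rwa [Fin.append_right, Fin.append_right] at this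
  simp [h1, h2]

noncomputable def Fev (β : ℝ) (n k : ℕ) : (Fin n → ℤ) → ℝ :=
  fun v => if Vpos n v n = 0 ∧ areaA n v = (k : ℤ) then ∏ i : Fin n, incP β (v i) else 0

lemma PV_eq_tsum_Fev (β : ℝ) (n k : ℕ) : PV β n k = ∑' v : Fin n → ℤ, Fev β n k v := by
  unfold PV wProb Fev
  exact tsum_congr fun v => by split_ifs <;> rfl

lemma Fev_nonneg {β : ℝ} (hβ : 0 < β) (n k : ℕ) (v : Fin n → ℤ) : 0 ≤ Fev β n k v := by
  unfold Fev
  split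
  · exact prod_incP_nonneg hβ v
  · exact le_rfl

lemma Fev_le {β : ℝ} (hβ : 0 < β) (n k : ℕ) (v : Fin n → ℤ) :
    Fev β n k v ≤ ∏ i : Fin n, incP β (v i) := by
  unfold Fev
  split
  · exact le_rfl
  · exact prod_incP_nonneg hβ v

lemma summable_Fev {β : ℝ} (hβ : 0 < β) (n k : ℕ) : Summable (Fev β n k) :=
  Summable.of_nonneg_of_le (Fev_nonneg hβ n k) (Fev_le hβ n k) (summable_prod_incP hβ n)

end AuxStmt6

/-- For every `β > 0` and all `N₁, N₂, K₁, K₂ ∈ ℕ`,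
`P_β(V_{N₁+N₂, K₁+K₂}) ≥ P_β(V_{N₁,K₁}) · P_β(V_{N₂,K₂})`. -/
theorem stmt6 (β : ℝ) (hβ : 0 < β) (N₁ N₂ K₁ K₂ : ℕ) :
    PV β (N₁ + N₂) (K₁ + K₂) ≥ PV β N₁ K₁ * PV β N₂ K₂ := by
  classical
  have hsF₁ := summable_Fev hβ N₁ K₁
  have hsF₂ := summable_Fev hβ N₂ K₂
  have hsF := summable_Fev hβ (N₁+N₂) (K₁+K₂)
  have hsG : Summable (fun p : (Fin N₁ → ℤ) × (Fin N₂ → ℤ) =>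
      Fev β N₁ K₁ p.1 * Fev β N₂ K₂ p.2) := by
    apply Summable.mul_of_nonneg hsF₁ hsF₂
    · intro v; exact Fev_nonneg hβ N₁ K₁ v
    · intro v; exact Fev_nonneg hβ N₂ K₂ v
  have key : ∀ p : (Fin N₁ → ℤ) × (Fin N₂ → ℤ),
      Fev β N₁ K₁ p.1 * Fev β N₂ K₂ p.2 ≤ Fev β (N₁+N₂) (K₁+K₂) (Fin.append p.1 p.2) := by
    rintro ⟨v₁, v₂⟩
    dsimp only
    by_cases h1 : Vpos N₁ v₁ N₁ = 0 ∧ areaA N₁ v₁ = (K₁ : ℤ)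
    · by_cases h2 : Vpos N₂ v₂ N₂ = 0 ∧ areaA N₂ v₂ = (K₂ : ℤ)
      · have hap : Vpos (N₁+N₂) (Fin.append v₁ v₂) (N₁+N₂) = 0 ∧
            areaA (N₁+N₂) (Fin.append v₁ v₂) = ((K₁+K₂ : ℕ) : ℤ) := by
          constructor
          · have := Vpos_append_ge v₁ v₂ N₂
            rw [h1.1, h2.1, add_zero] at this
            exact this
          · rw [area_append v₁ v₂ h1.1, h1.2, h2.2]
            push_cast
            ring
        unfold Fev
        rw [if_pos h1, if_pos h2, if_pos hap, prod_incP_append]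
      · unfold Fev
        rw [if_neg h2, mul_zero]
        exact Fev_nonneg hβ _ _ _
    · unfold Fev
      rw [if_neg h1, zero_mul]
      exact Fev_nonneg hβ _ _ _
  have heq : PV β N₁ K₁ * PV β N₂ K₂
      = ∑' p : (Fin N₁ → ℤ) × (Fin N₂ → ℤ), Fev β N₁ K₁ p.1 * Fev β N₂ K₂ p.2 := by
    rw [PV_eq_tsum_Fev, PV_eq_tsum_Fev]
    exact Summable.tsum_mul_tsum hsF₁ hsF₂ hsG
  have hle : ∑' p : (Fin N₁ → ℤ) × (Fin N₂ → ℤ), Fev β N₁ K₁ p.1 * Fev β N₂ K₂ p.2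
      ≤ ∑' v, Fev β (N₁+N₂) (K₁+K₂) v := by
    apply Summable.tsum_le_tsum_of_inj _ append_injective
    · intro c _; exact Fev_nonneg hβ _ _ c
    · exact key
    · exact hsG
    · exact hsF
  rw [ge_iff_le, heq, PV_eq_tsum_Fev]
  exact hle
end

section
/- For every β > 0 the function g_β is concave on the nonnegative rationals: for all rationals α₁, α₂ ≥ 0 and all integers 0 ≤ p ≤ q with q > 0, g_β((p/q)α₁ + (1−p/q)α₂) ≥ (p/q)g_β(α₁) + (1−p/q)g_β(α₂). -/
open scoped Classical
open Filter

/-!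
Concatenating two bridges (walks returning to `0`) of lengths `n₁, n₂` and areas `k₁, k₂` gives a
bridge of length `n₁ + n₂` and area `k₁ + k₂`, and the product weight of the increments
factorises, so `P_β(V_{n₁,k₁}) P_β(V_{n₂,k₂}) ≤ P_β(V_{n₁+n₂,k₁+k₂})`: the function
`(n, k) ↦ log P_β(V_{n,k})` is superadditive. For `N₁ ∈ N_{α₁}`, `N₂ ∈ N_{α₂}` and `λ = p/q`,
gluing `p N₂` bridges from `V_{N₁,α₁N₁}` and `(q - p) N₁` bridges from `V_{N₂,α₂N₂}` yields a
bridge of length `N = q N₁ N₂` and area `(λ α₁ + (1 - λ) α₂) N`, so dividing the logarithms by `N`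
gives `λ x₁ + (1 - λ) x₂ ≤ g_β(λ α₁ + (1 - λ) α₂)` for all members `x₁, x₂` of the sets whose
suprema are `g_β(α₁), g_β(α₂)`.
-/

open ENNReal
open scoped Pointwise

namespace RandomWalkArea

variable {β : ℝ}

lemma cbeta_pos (hβ : 0 < β) : 0 < cbeta β := by
  have h : Real.exp (-β / 2) < 1 := Real.exp_lt_one_iff.2 (by linarith)
  exact div_pos (by linarith [Real.exp_pos (-β / 2)]) (by linarith)

lemma incP_pos (hβ : 0 < β) (k : ℤ) : 0 < incP β k :=
  div_pos (Real.exp_pos _) (cbeta_pos hβ)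

lemma summable_incP (hβ : 0 < β) : Summable (incP β) := by
  set r := Real.exp (-(β / 2))
  have hr : r < 1 := Real.exp_lt_one_iff.2 (by linarith)
  have hgeo : Summable fun k : ℤ => r ^ k.natAbs := by
    apply Summable.of_nat_of_neg <;>
      simp only [Int.natAbs_natCast, Int.natAbs_neg] <;>
      exact summable_geometric_of_lt_one (Real.exp_pos _).le hr
  refine (hgeo.div_const (cbeta β)).congr fun k => ?_
  rw [incP, ← Real.exp_nat_mul, Nat.cast_natAbs, Int.cast_abs, mul_comm]

-- Weights live in `ℝ≥0∞`, where every sum exists, and are transferred to `wProb` by `toReal`.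
noncomputable def pathWeight (β : ℝ) (n : ℕ) (v : Fin n → ℤ) : ℝ≥0∞ :=
  ∏ i, ENNReal.ofReal (incP β (v i))

noncomputable def eventWeight (β : ℝ) (n : ℕ) (E : (Fin n → ℤ) → Prop) : ℝ≥0∞ :=
  ∑' v, if E v then pathWeight β n v else 0

lemma pathWeight_append {n m : ℕ} (v : Fin n → ℤ) (w : Fin m → ℤ) :
    pathWeight β (n + m) (Fin.append v w) = pathWeight β n v * pathWeight β m w := by
  simp only [pathWeight, Fin.prod_univ_add, Fin.append_left, Fin.append_right]

lemma tsum_pathWeight (β : ℝ) (n : ℕ) :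
    ∑' v, pathWeight β n v = (∑' k, ENNReal.ofReal (incP β k)) ^ n := by
  induction n with
  | zero => simp [pathWeight]
  | succ n ih =>
    rw [← (Fin.appendEquiv n 1).tsum_eq, ENNReal.tsum_prod', pow_succ, ← ih,
      ← ENNReal.tsum_mul_right]
    refine tsum_congr fun v => ?_
    rw [← (Equiv.funUnique (Fin 1) ℤ).symm.tsum_eq, ← ENNReal.tsum_mul_left]
    refine tsum_congr fun k => ?_
    change pathWeight β (n + 1) (Fin.append v _) = _
    rw [pathWeight_append]
    simp [pathWeight]

lemma tsum_ofReal_incP (hβ : 0 < β) :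
    ∑' k, ENNReal.ofReal (incP β k) = ENNReal.ofReal (∑' k, incP β k) :=
  (ofReal_tsum_of_nonneg (fun k => (incP_pos hβ k).le) (summable_incP hβ)).symm

lemma eventWeight_le_pow (β : ℝ) (n : ℕ) (E : (Fin n → ℤ) → Prop) :
    eventWeight β n E ≤ (∑' k, ENNReal.ofReal (incP β k)) ^ n := by
  rw [← tsum_pathWeight]
  refine ENNReal.tsum_le_tsum fun v => ?_
  split_ifs <;> simp

lemma eventWeight_ne_top (hβ : 0 < β) (n : ℕ) (E : (Fin n → ℤ) → Prop) :
    eventWeight β n E ≠ ∞ :=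
  ne_top_of_le_ne_top (by rw [tsum_ofReal_incP hβ]; exact pow_ne_top ofReal_ne_top)
    (eventWeight_le_pow β n E)

lemma wProb_eq_toReal (hβ : 0 < β) (n : ℕ) (E : (Fin n → ℤ) → Prop) :
    wProb β n E = (eventWeight β n E).toReal := by
  rw [eventWeight, ENNReal.tsum_toReal_eq fun v => ?_]
  · refine tsum_congr fun v => ?_
    split_ifs
    · rw [pathWeight, ENNReal.toReal_prod]
      exact Finset.prod_congr rfl fun i _ => (toReal_ofReal (incP_pos hβ _).le).symm
    · rfl
  · split_ifs
    · exact prod_ne_top fun i _ => ofReal_ne_top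
    · exact zero_ne_top

lemma eventWeight_mul_le {n m : ℕ} {E₁ : (Fin n → ℤ) → Prop} {E₂ : (Fin m → ℤ) → Prop}
    {E : (Fin (n + m) → ℤ) → Prop} (h : ∀ v w, E₁ v → E₂ w → E (Fin.append v w)) :
    eventWeight β n E₁ * eventWeight β m E₂ ≤ eventWeight β (n + m) E := by
  rw [eventWeight, eventWeight, eventWeight, ← (Fin.appendEquiv n m).tsum_eq, ENNReal.tsum_prod',
    ← ENNReal.tsum_mul_right]
  refine ENNReal.tsum_le_tsum fun v => ?_
  rw [← ENNReal.tsum_mul_left]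
  refine ENNReal.tsum_le_tsum fun w => ?_
  change _ ≤ if E (Fin.append v w) then pathWeight β (n + m) (Fin.append v w) else 0
  by_cases h₁ : E₁ v
  · by_cases h₂ : E₂ w
    · rw [if_pos h₁, if_pos h₂, if_pos (h v w h₁ h₂), pathWeight_append]
    · simp [h₂]
  · simp [h₁]

lemma wProb_mul_le (hβ : 0 < β) {n m : ℕ} {E₁ : (Fin n → ℤ) → Prop} {E₂ : (Fin m → ℤ) → Prop}
    {E : (Fin (n + m) → ℤ) → Prop} (h : ∀ v w, E₁ v → E₂ w → E (Fin.append v w)) :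
    wProb β n E₁ * wProb β m E₂ ≤ wProb β (n + m) E := by
  simp only [wProb_eq_toReal hβ, ← toReal_mul]
  exact toReal_mono (eventWeight_ne_top hβ _ _) (eventWeight_mul_le h)

lemma wProb_pos (hβ : 0 < β) {n : ℕ} {E : (Fin n → ℤ) → Prop} {v : Fin n → ℤ} (hv : E v) :
    0 < wProb β n E := by
  rw [wProb_eq_toReal hβ]
  refine toReal_pos (ne_of_gt ?_) (eventWeight_ne_top hβ n E)
  calc (0 : ℝ≥0∞) < pathWeight β n v :=
        CanonicallyOrderedAdd.prod_pos.2 fun i _ => ofReal_pos.2 (incP_pos hβ _)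
    _ = if E v then pathWeight β n v else 0 := (if_pos hv).symm
    _ ≤ eventWeight β n E := ENNReal.le_tsum v

lemma wProb_le_pow (hβ : 0 < β) (n : ℕ) (E : (Fin n → ℤ) → Prop) :
    wProb β n E ≤ (∑' k, incP β k) ^ n := by
  rw [wProb_eq_toReal hβ]
  calc (eventWeight β n E).toReal ≤ ((∑' k, ENNReal.ofReal (incP β k)) ^ n).toReal :=
        toReal_mono (by rw [tsum_ofReal_incP hβ]; exact pow_ne_top ofReal_ne_top)
          (eventWeight_le_pow β n E)
    _ = (∑' k, incP β k) ^ n := by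
        rw [tsum_ofReal_incP hβ, toReal_pow,
          toReal_ofReal (tsum_nonneg fun k => (incP_pos hβ k).le)]

lemma Vpos_self (n : ℕ) (v : Fin n → ℤ) : Vpos n v n = ∑ i, v i :=
  Finset.sum_congr rfl fun i _ => if_pos i.isLt

lemma Vpos_append_of_le {n m : ℕ} (v : Fin n → ℤ) (w : Fin m → ℤ) {j : ℕ} (hj : j ≤ n) :
    Vpos (n + m) (Fin.append v w) j = Vpos n v j := by
  rw [Vpos, Vpos, Fin.sum_univ_add]
  simp only [Fin.val_castAdd, Fin.val_natAdd, Fin.append_left, Fin.append_right, add_eq_left]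
  exact Finset.sum_eq_zero fun i _ => if_neg (by omega)

lemma Vpos_append_add {n m : ℕ} (v : Fin n → ℤ) (w : Fin m → ℤ) (j : ℕ) :
    Vpos (n + m) (Fin.append v w) (n + j) = Vpos n v n + Vpos m w j := by
  rw [Vpos, Fin.sum_univ_add, Vpos_self, Vpos]
  simp only [Fin.val_castAdd, Fin.val_natAdd, Fin.append_left, Fin.append_right,
    add_lt_add_iff_left]
  rw [Finset.sum_congr rfl fun i _ => if_pos (by omega)]

lemma areaA_append {n m : ℕ} {v : Fin n → ℤ} (w : Fin m → ℤ) (hv : Vpos n v n = 0) :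
    areaA (n + m) (Fin.append v w) = areaA n v + areaA m w := by
  have hIcc (k : ℕ) : Finset.Icc 1 k = Finset.Ioc 0 k := Finset.Icc_add_one_left_eq_Ioc 0 k
  have hIoc : Finset.Ioc n (n + m) = (Finset.Ioc 0 m).map (addLeftEmbedding n) := by simp
  rw [areaA, areaA, areaA, hIcc, hIcc, hIcc, ← Finset.sum_Ioc_consecutive _ n.zero_le
    (n.le_add_right m), hIoc, Finset.sum_map]
  congr 1
  · exact Finset.sum_congr rfl fun j hj => by rw [Vpos_append_of_le v w (Finset.mem_Ioc.1 hj).2]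
  · exact Finset.sum_congr rfl fun j _ => by
      rw [addLeftEmbedding_apply, Vpos_append_add, hv, zero_add]

lemma PVq_nonneg (hβ : 0 < β) (n : ℕ) (q : ℚ) : 0 ≤ PVq β n q := by
  rw [PVq, wProb_eq_toReal hβ]
  exact toReal_nonneg

lemma PVq_mul_le (hβ : 0 < β) (n m : ℕ) (q₁ q₂ : ℚ) :
    PVq β n q₁ * PVq β m q₂ ≤ PVq β (n + m) (q₁ + q₂) := by
  refine wProb_mul_le hβ fun v w hv hw => ⟨?_, ?_⟩
  · rw [Vpos_append_add, hv.1, hw.1, add_zero]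
  · rw [areaA_append w hv.1, Int.cast_add, hv.2, hw.2]

lemma PVq_zero_zero (β : ℝ) : PVq β 0 0 = 1 := by
  rw [PVq, wProb, tsum_eq_single 0 fun v hv => absurd (Subsingleton.elim v 0) hv]
  simp [Vpos, areaA]

lemma PVq_pow_le (hβ : 0 < β) (n : ℕ) (q : ℚ) (a : ℕ) :
    PVq β n q ^ a ≤ PVq β (a * n) (a * q) := by
  induction a with
  | zero => simp [PVq_zero_zero]
  | succ a ih =>
    calc PVq β n q ^ (a + 1) = PVq β n q ^ a * PVq β n q := pow_succ _ _
      _ ≤ PVq β (a * n) (a * q) * PVq β n q :=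
        mul_le_mul_of_nonneg_right ih (PVq_nonneg hβ n q)
      _ ≤ PVq β (a * n + n) (a * q + q) := PVq_mul_le hβ _ _ _ _
      _ = PVq β ((a + 1) * n) ((a + 1 : ℕ) * q) := by
        rw [Nat.succ_mul, Nat.cast_succ, add_one_mul]

lemma PVq_zero_pos (hβ : 0 < β) (n : ℕ) : 0 < PVq β n 0 :=
  wProb_pos hβ (v := 0) ⟨by simp [Vpos], by simp [areaA, Vpos]⟩

lemma PVq_two_natCast_pos (hβ : 0 < β) (m : ℕ) : 0 < PVq β 2 m := by
  refine wProb_pos hβ (v := ![(m : ℤ), -m]) ⟨by simp [Vpos, Fin.sum_univ_two], ?_⟩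
  have h : Finset.Icc 1 2 = ({1, 2} : Finset ℕ) := by decide
  simp [areaA, h, Vpos, Fin.sum_univ_two]

lemma PVq_natCast_pos (hβ : 0 < β) {n : ℕ} (hn : 2 ≤ n) (m : ℕ) : 0 < PVq β n m := by
  obtain ⟨k, rfl⟩ := Nat.exists_eq_add_of_le hn
  simpa using (mul_pos (PVq_two_natCast_pos hβ m) (PVq_zero_pos hβ k)).trans_le
    (PVq_mul_le hβ 2 k m 0)

lemma PVq_pos_of_Nmem (hβ : 0 < β) {α : ℚ} {n : ℕ} (hn : Nmem α n) : 0 < PVq β n (α * n) := by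
  obtain ⟨h2, m, hm⟩ := hn
  rw [hm]
  exact PVq_natCast_pos hβ h2 m

lemma mul_log_PVq_add_mul_log_PVq_le (hβ : 0 < β) {n₁ n₂ : ℕ} {q₁ q₂ : ℚ}
    (h₁ : 0 < PVq β n₁ q₁) (h₂ : 0 < PVq β n₂ q₂) (a b : ℕ) :
    a * Real.log (PVq β n₁ q₁) + b * Real.log (PVq β n₂ q₂) ≤
      Real.log (PVq β (a * n₁ + b * n₂) (a * q₁ + b * q₂)) := by
  rw [← Real.log_pow, ← Real.log_pow, ← Real.log_mul (by positivity) (by positivity)]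
  refine Real.log_le_log (by positivity) ?_
  calc PVq β n₁ q₁ ^ a * PVq β n₂ q₂ ^ b
      ≤ PVq β (a * n₁) (a * q₁) * PVq β (b * n₂) (b * q₂) :=
        mul_le_mul (PVq_pow_le hβ _ _ a) (PVq_pow_le hβ _ _ b) (by positivity)
          (PVq_nonneg hβ _ _)
    _ ≤ _ := PVq_mul_le hβ _ _ _ _

lemma exists_Nmem {α : ℚ} (hα : 0 ≤ α) : ∃ n, Nmem α n := by
  refine ⟨2 * α.den, by have := α.den_pos; omega, 2 * α.num.toNat, ?_⟩
  have hnum : ((α.num.toNat : ℕ) : ℚ) = α.num := by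
    exact_mod_cast Int.toNat_of_nonneg (Rat.num_nonneg.2 hα)
  push_cast [hnum]
  linear_combination 2 * Rat.mul_den_eq_num α

def rateSet (β : ℝ) (α : ℚ) : Set ℝ :=
  {x : ℝ | ∃ n : ℕ, Nmem α n ∧ x = Real.log (PVq β n (α * n)) / n}

lemma rateSet_nonempty (β : ℝ) {α : ℚ} (hα : 0 ≤ α) : (rateSet β α).Nonempty :=
  let ⟨n, hn⟩ := exists_Nmem hα
  ⟨_, n, hn, rfl⟩

lemma bddAbove_rateSet (hβ : 0 < β) (α : ℚ) : BddAbove (rateSet β α) := by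
  refine ⟨Real.log (∑' k, incP β k), ?_⟩
  rintro _ ⟨n, hn, rfl⟩
  have hlog := Real.log_le_log (PVq_pos_of_Nmem hβ hn) (wProb_le_pow hβ n _)
  rw [Real.log_pow] at hlog
  rw [div_le_iff₀ (Nat.cast_pos.2 (by have := hn.1; omega))]
  linarith

lemma div_le_gQ (hβ : 0 < β) {α : ℚ} {n : ℕ} (hn : Nmem α n) :
    Real.log (PVq β n (α * n)) / n ≤ gQ β α :=
  le_csSup (bddAbove_rateSet hβ α) ⟨n, hn, rfl⟩

lemma mul_csSup_add_mul_csSup_le {S₁ S₂ : Set ℝ} {a b c : ℝ} (ha : 0 ≤ a) (hb : 0 ≤ b)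
    (hne₁ : S₁.Nonempty) (hne₂ : S₂.Nonempty) (hbdd₁ : BddAbove S₁) (hbdd₂ : BddAbove S₂)
    (h : ∀ x₁ ∈ S₁, ∀ x₂ ∈ S₂, a * x₁ + b * x₂ ≤ c) :
    a * sSup S₁ + b * sSup S₂ ≤ c := by
  rw [← smul_eq_mul, ← smul_eq_mul, ← Real.sSup_smul_of_nonneg ha, ← Real.sSup_smul_of_nonneg hb,
    ← csSup_add hne₁.smul_set (hbdd₁.smul_of_nonneg ha) hne₂.smul_set (hbdd₂.smul_of_nonneg hb)]
  refine csSup_le (hne₁.smul_set.add hne₂.smul_set) ?_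
  rintro _ ⟨_, ⟨x₁, hx₁, rfl⟩, _, ⟨x₂, hx₂, rfl⟩, rfl⟩
  exact h x₁ hx₁ x₂ hx₂

lemma mix_le_gQ (hβ : 0 < β) {α₁ α₂ : ℚ} {n₁ n₂ p q : ℕ} (hq : 0 < q) (hpq : p ≤ q)
    (hn₁ : Nmem α₁ n₁) (hn₂ : Nmem α₂ n₂) :
    (p / q : ℝ) * (Real.log (PVq β n₁ (α₁ * n₁)) / n₁) +
        (1 - p / q : ℝ) * (Real.log (PVq β n₂ (α₂ * n₂)) / n₂) ≤
      gQ β ((p / q : ℚ) * α₁ + (1 - p / q : ℚ) * α₂) := by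
  obtain ⟨d, rfl⟩ := Nat.exists_eq_add_of_le hpq
  set α : ℚ := (p / (p + d : ℕ) : ℚ) * α₁ + (1 - p / (p + d : ℕ) : ℚ) * α₂
  set N := p * n₂ * n₁ + d * n₁ * n₂
  have hcombo := mul_log_PVq_add_mul_log_PVq_le hβ (PVq_pos_of_Nmem hβ hn₁)
    (PVq_pos_of_Nmem hβ hn₂) (p * n₂) (d * n₁)
  obtain ⟨hn₁2, m₁, hm₁⟩ := hn₁
  obtain ⟨hn₂2, m₂, hm₂⟩ := hn₂
  have hq' : ((p + d : ℕ) : ℚ) ≠ 0 := by exact_mod_cast hq.ne'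
  have hqR : (p + d : ℝ) ≠ 0 := by exact_mod_cast hq.ne'
  have hαN : α * N = (p * n₂ : ℕ) * (α₁ * n₁) + (d * n₁ : ℕ) * (α₂ * n₂) := by
    simp only [α, N]
    field_simp
    push_cast
    ring
  have hN2 : 2 ≤ N := by
    have h4 := Nat.mul_le_mul hn₁2 hn₂2
    have : N = (p + d) * (n₁ * n₂) := by ring
    rw [this]
    nlinarith
  have hN : Nmem α N := ⟨hN2, p * n₂ * m₁ + d * n₁ * m₂, by rw [hαN, hm₁, hm₂]; push_cast; ring⟩
  rw [← hαN] at hcombo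
  calc _ = ((p * n₂ : ℕ) * Real.log (PVq β n₁ (α₁ * n₁)) +
        (d * n₁ : ℕ) * Real.log (PVq β n₂ (α₂ * n₂))) / N := by
        simp only [N]
        push_cast
        field_simp
        ring
    _ ≤ Real.log (PVq β N (α * N)) / N := by gcongr
    _ ≤ gQ β α := div_le_gQ hβ hN

end RandomWalkArea

open RandomWalkArea in
/-- Concavity of `g_β` on the nonnegative rationals. -/
theorem stmt8 (β : ℝ) (hβ : 0 < β) (α₁ α₂ : ℚ) (h1 : 0 ≤ α₁) (h2 : 0 ≤ α₂)
    (p q : ℕ) (hq : 0 < q) (hpq : p ≤ q) :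
    gQ β (((p : ℚ) / q) * α₁ + (1 - (p : ℚ) / q) * α₂) ≥
      ((p : ℝ) / q) * gQ β α₁ + (1 - (p : ℝ) / q) * gQ β α₂ := by
  have hp : 0 ≤ 1 - (p : ℝ) / q :=
    sub_nonneg.2 (div_le_one_of_le₀ (by exact_mod_cast hpq) q.cast_nonneg)
  refine mul_csSup_add_mul_csSup_le (by positivity) hp (rateSet_nonempty β h1)
    (rateSet_nonempty β h2) (bddAbove_rateSet hβ α₁) (bddAbove_rateSet hβ α₂) ?_
  rintro _ ⟨n₁, hn₁, rfl⟩ _ ⟨n₂, hn₂, rfl⟩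
  exact mix_le_gQ hβ hq hpq hn₁ hn₂
end

section
/- For every α > 0, every M ∈ ℕ and every N ∈ Ma²ℕ (where a = ⌊α⌋), the inclusion A_{N,α} ⊆ B_{N,M,α} holds: every trajectory (V_i)_{i=0}^N with V_0 = 0 and Σ_{i=0}^N |V_i| ≤ αN must, in at least N/(4Ma²) of the N/(Ma²) consecutive blocks I_{j,M} = {(j−1)Ma²+1, …, jMa²} of length Ma², spend at least Ma²/3 time steps i with |V_i| < 2α. -/
open scoped Classical
open Filter

/-!
A block in which fewer than a third of the sites have `|V i| < 2α` has at least two thirds of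
its `K = M⌊α⌋²` sites with `|V i| ≥ 2α`, so it carries area at least `(4/3)αK`. The total area
is at most `αN = αK·n`, so by Markov's inequality at most three quarters of the `n` blocks can
be of this kind.
-/

open Finset

theorem Finset.card_filter_le_nsmul_le_sum {ι M : Type*} [AddCommMonoid M] [PartialOrder M]
    [IsOrderedAddMonoid M] (s : Finset ι) (p : ι → Prop) [DecidablePred p] {f : ι → M}
    (hf : ∀ i ∈ s, 0 ≤ f i) {c : M} (hc : ∀ i ∈ s, p i → c ≤ f i) :
    #{i ∈ s | p i} • c ≤ ∑ i ∈ s, f i :=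
  calc #{i ∈ s | p i} • c ≤ ∑ i ∈ s with p i, f i :=
        card_nsmul_le_sum _ _ _ fun i hi ↦ (mem_filter.1 hi).elim (hc i)
    _ ≤ ∑ i ∈ s, f i := sum_le_sum_of_subset_of_nonneg (filter_subset _ _) fun i hi _ ↦ hf i hi

theorem Finset.sub_card_filter_lt_mul_le_sum {ι : Type*} (s : Finset ι) {f : ι → ℝ}
    (hf : ∀ i ∈ s, 0 ≤ f i) (t : ℝ) :
    ((#s : ℝ) - #{i ∈ s | f i < t}) * t ≤ ∑ i ∈ s, f i := by
  have hcard : (#s : ℝ) - #{i ∈ s | f i < t} = #{i ∈ s | ¬f i < t} := by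
    rw [← s.card_filter_add_card_filter_not (fun i ↦ f i < t)]
    push_cast
    ring
  rw [hcard, ← nsmul_eq_mul]
  exact s.card_filter_le_nsmul_le_sum _ hf fun i _ hi ↦ not_lt.1 hi

theorem Finset.sum_Icc_blocks {M : Type*} [AddCommMonoid M] (K n : ℕ) (f : ℕ → M) :
    ∑ j ∈ Icc 1 n, ∑ i ∈ Icc ((j - 1) * K + 1) (j * K), f i = ∑ i ∈ Icc 1 (n * K), f i := by
  induction n with
  | zero => simp
  | succ n ih =>
    have hIoc : ∀ m, Icc 1 m = Ioc 0 m := Icc_add_one_left_eq_Ioc 0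
    rw [sum_Icc_succ_top (by omega), ih, Nat.add_sub_cancel, hIoc, hIoc, Icc_add_one_left_eq_Ioc]
    exact sum_Ioc_consecutive f (Nat.zero_le _) (Nat.mul_le_mul_right K n.le_succ)

theorem div_four_le_card_blocks_of_sum_le (K n : ℕ) (hK : 0 < K) {f : ℕ → ℝ}
    (hf : ∀ i, 0 ≤ f i) {t : ℝ} (ht : 0 < t) (hsum : ∑ i ∈ Icc 1 (n * K), f i ≤ t * (n * K)) :
    (n : ℝ) / 4 ≤
      #{j ∈ Icc 1 n | (K : ℝ) / 3 ≤ #{i ∈ Icc ((j - 1) * K + 1) (j * K) | f i < 2 * t}} := by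
  set block : ℕ → Finset ℕ := fun j ↦ Icc ((j - 1) * K + 1) (j * K)
  set good : ℕ → Prop := fun j ↦ (K : ℝ) / 3 ≤ #{i ∈ block j | f i < 2 * t}
  have hblock_card : ∀ j ∈ Icc 1 n, #(block j) = K := fun j hj ↦ by
    obtain ⟨j, rfl⟩ : ∃ m, j = m + 1 := ⟨j - 1, by grind⟩
    simp only [block, Nat.card_Icc, Nat.add_sub_cancel]
    rw [Nat.succ_mul]
    omega
  have hbad_sum : ∀ j ∈ Icc 1 n, ¬good j → 2 * K / 3 * (2 * t) ≤ ∑ i ∈ block j, f i :=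
    fun j hj hbad ↦ by
      have hmarkov := (block j).sub_card_filter_lt_mul_le_sum (fun i _ ↦ hf i) (2 * t)
      rw [hblock_card j hj] at hmarkov
      exact le_trans (by gcongr; linarith [not_le.1 hbad]) hmarkov
  have hbad : #{j ∈ Icc 1 n | ¬good j} * (2 * K / 3 * (2 * t)) ≤ t * (n * K) := by
    rw [← nsmul_eq_mul]
    calc _ ≤ ∑ j ∈ Icc 1 n, ∑ i ∈ block j, f i :=
          card_filter_le_nsmul_le_sum _ _ (fun j _ ↦ sum_nonneg fun i _ ↦ hf i) hbad_sum
      _ ≤ t * (n * K) := by rwa [sum_Icc_blocks]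
  have hsplit : (#{j ∈ Icc 1 n | good j} : ℝ) + #{j ∈ Icc 1 n | ¬good j} = n := by
    rw [← Nat.cast_add, card_filter_add_card_filter_not, Nat.card_Icc, Nat.add_sub_cancel]
  have htK : 0 < t * K := by positivity
  nlinarith

theorem stmt19_general (α : ℝ) (M : ℕ) (n N : ℕ)
    (hN : N = M * (Nat.floor α) ^ 2 * n)
    (V : ℕ → ℤ)
    (hA : (∑ i ∈ Finset.range (N + 1), (|V i| : ℝ)) ≤ α * N) :
    (N : ℝ) / (4 * M * (Nat.floor α) ^ 2) ≤
      (((Finset.Icc 1 n).filter (fun j =>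
        ((M * (Nat.floor α) ^ 2 : ℕ) : ℝ) / 3 ≤
          (((Finset.Icc ((j - 1) * (M * (Nat.floor α) ^ 2) + 1)
              (j * (M * (Nat.floor α) ^ 2))).filter
            (fun i => (|V i| : ℝ) < 2 * α)).card : ℝ))).card : ℝ) := by
  set K := M * ⌊α⌋₊ ^ 2 with hK
  have hden : (4 * M * ⌊α⌋₊ ^ 2 : ℝ) = 4 * K := by push_cast [hK]; ring
  rw [hden]
  rcases Nat.eq_zero_or_pos K with hK0 | hKpos
  · simp [hK0]
  have hα : 1 ≤ α := Nat.floor_pos.1 <| Nat.pos_of_ne_zero fun h ↦ by simp [hK, h] at hKpos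
  have hNK : N = n * K := by rw [hN, mul_comm]
  have hsum : ∑ i ∈ Icc 1 (n * K), (|V i| : ℝ) ≤ α * (n * K) := by
    rw [← hNK, ← Nat.cast_mul, ← hNK]
    refine le_trans (sum_le_sum_of_subset_of_nonneg ?_ fun i _ _ ↦ by positivity) hA
    exact fun i hi ↦ mem_range.2 (Nat.lt_succ_of_le (mem_Icc.1 hi).2)
  have hgoal := div_four_le_card_blocks_of_sum_le K n hKpos (fun i ↦ abs_nonneg _)
    (by linarith) hsum
  rwa [hNK, Nat.cast_mul, mul_div_mul_right _ _ (by positivity : (K : ℝ) ≠ 0)]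

/-- Deterministic inclusion `A_{N,α} ⊆ B_{N,M,α}`: if a
trajectory `(V_i)_{i=0}^N` with `V_0 = 0` satisfies `Σ_{i=0}^N |V_i| ≤ αN`,
then in at least `N/(4Ma²)` of the `N/(Ma²) = n` blocks
`I_{j,M} = {(j-1)Ma²+1, …, jMa²}` it spends at least `Ma²/3` time steps `i`
with `|V_i| < 2α` (here `a = ⌊α⌋` and `N = Ma²·n`). -/
theorem stmt19 (α : ℝ) (hα : 0 < α) (M : ℕ) (hM : 0 < M) (n N : ℕ)
    (hN : N = M * (Nat.floor α) ^ 2 * n)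
    (V : ℕ → ℤ) (hV0 : V 0 = 0)
    (hA : (∑ i ∈ Finset.range (N + 1), (|V i| : ℝ)) ≤ α * N) :
    (N : ℝ) / (4 * M * (Nat.floor α) ^ 2) ≤
      (((Finset.Icc 1 n).filter (fun j =>
        ((M * (Nat.floor α) ^ 2 : ℕ) : ℝ) / 3 ≤
          (((Finset.Icc ((j - 1) * (M * (Nat.floor α) ^ 2) + 1)
              (j * (M * (Nat.floor α) ^ 2))).filter
            (fun i => (|V i| : ℝ) < 2 * α)).card : ℝ))).card : ℝ) :=
  stmt19_general α M n N hN V hA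
end
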